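/- arXiv:2505.03916 — 2 statements merged into one kernel-verified Lean document; each statement's English description precedes it below -/
import Mathlib

section
/- Define polynomials S : ℕ → ℤ[X] by S 0 = 1, S 1 = X, and S (n+2) = X · S (n+1) − S n. For natural numbers n, m with m ≤ n and n − m even, define T(n,m) = binom(n, (n−m)/2) − binom(n, (n−m)/2 − 1), where binom(n, −1) is interpreted as 0. Then for every n ∈ ℕ, X^n = ∑_{k=0}^{⌊n/2⌋} T(n, n−2k) · S (n−2k) in ℤ[X]. -/
open Polynomial

/-- The renormalized Chebyshev polynomials of the second kind:
`S 0 = 1`, `S 1 = X`, `S (n+2) = X * S (n+1) - S n`. -/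
noncomputable def chebS : ℕ → Polynomial ℤ
  | 0 => 1
  | 1 => X
  | (n + 2) => X * chebS (n + 1) - chebS n

/-- The Catalan triangle numbers: for `m ≤ n` with `n - m` even,
`T(n,m) = binom(n, (n-m)/2) - binom(n, (n-m)/2 - 1)`, where `binom(n, -1)` is
interpreted as `0`. -/
def catalanT (n m : ℕ) : ℤ :=
  (n.choose ((n - m) / 2) : ℤ) -
    (if (n - m) / 2 = 0 then 0 else (n.choose ((n - m) / 2 - 1) : ℤ))

def ctri : ℕ → ℕ → ℤ
  | 0, 0 => 1
  | 0, _ + 1 => 0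
  | n + 1, 0 => ctri n 1
  | n + 1, j + 1 => ctri n j + ctri n (j + 2)

lemma catalanT_zero (n m : ℕ) (h : (n - m) / 2 = 0) : catalanT n m = 1 := by
  rw [catalanT, h]; simp

lemma catalanT_succ (n m d : ℕ) (h : (n - m) / 2 = d + 1) :
    catalanT n m = (n.choose (d + 1) : ℤ) - n.choose d := by
  rw [catalanT, h, if_neg (Nat.succ_ne_zero d), Nat.add_sub_cancel]

lemma ctri_eq_zero : ∀ n j, n < j → ctri n j = 0 := by
  intro n
  induction n with
  | zero => intro j hj; match j, hj with | j+1, _ => rfl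
  | succ n ih =>
    intro j hj
    match j, hj with
    | j+1, hj =>
      show ctri n j + ctri n (j+2) = 0
      rw [ih j (by omega), ih (j+2) (by omega)]; ring

lemma X_mul_chebS (j : ℕ) :
    X * chebS j = chebS (j + 1) + (if j = 0 then 0 else chebS (j - 1)) := by
  match j with
  | 0 => simp [chebS]
  | j + 1 =>
    have h : chebS (j + 2) = X * chebS (j + 1) - chebS j := rfl
    rw [if_neg (Nat.succ_ne_zero j), Nat.add_sub_cancel, h]; ring

lemma step1 (n : ℕ) :
    (X : Polynomial ℤ) ^ n = ∑ j ∈ Finset.range (n + 1), C (ctri n j) * chebS j := by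
  induction n with
  | zero => simp [ctri, chebS]
  | succ n ih =>
    have key : ∀ j ∈ Finset.range (n + 2),
        C (ctri (n+1) j) * chebS j =
          (if j = 0 then 0 else C (ctri n (j-1)) * chebS j)
            + C (ctri n (j+1)) * chebS j := by
      intro j _
      match j with
      | 0 => show C (ctri n 1) * chebS 0 = 0 + C (ctri n 1) * chebS 0; ring
      | j+1 =>
        show C (ctri n j + ctri n (j+2)) * chebS (j+1) = _
        rw [if_neg (Nat.succ_ne_zero j), Nat.add_sub_cancel, map_add]
        ring
    rw [Finset.sum_congr rfl key, Finset.sum_add_distrib]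
    have hA : ∑ j ∈ Finset.range (n + 2),
        (if j = 0 then 0 else C (ctri n (j-1)) * chebS j)
        = ∑ j ∈ Finset.range (n + 1), C (ctri n j) * chebS (j+1) := by
      rw [Finset.sum_range_succ']
      simp
    have hB : ∑ j ∈ Finset.range (n + 2), C (ctri n (j+1)) * chebS j
        = ∑ j ∈ Finset.range (n + 1), C (ctri n j) *
            (if j = 0 then 0 else chebS (j-1)) := by
      rw [Finset.sum_range_succ, ctri_eq_zero n (n+2) (by omega)]
      rw [Finset.sum_range_succ, ctri_eq_zero n (n+1) (by omega)]
      rw [Finset.sum_range_succ' (fun j => C (ctri n j) *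
            (if j = 0 then 0 else chebS (j-1))) n]
      simp
    rw [hA, hB, ← Finset.sum_add_distrib]
    have h2 : ∀ j ∈ Finset.range (n+1),
        C (ctri n j) * chebS (j+1) + C (ctri n j) * (if j = 0 then 0 else chebS (j-1))
          = X * (C (ctri n j) * chebS j) := by
      intro j _; rw [mul_left_comm, X_mul_chebS]; ring
    rw [Finset.sum_congr rfl h2, ← Finset.mul_sum, ← ih, pow_succ]
    ring

lemma ctri_eq : ∀ n j, ctri n j =
    if j ≤ n ∧ (n - j) % 2 = 0 then catalanT n j else 0 := by
  intro n
  induction n with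
  | zero =>
    intro j
    match j with
    | 0 => simp [ctri, catalanT]
    | j + 1 => simp [ctri]
  | succ n ih =>
    intro j
    match j with
    | 0 =>
      show ctri n 1 = _
      rw [ih 1]
      rcases Nat.even_or_odd n with ⟨d, hd⟩ | ⟨d, hd⟩
      · rw [if_neg (by omega), if_neg (by omega)]
      · subst hd
        rw [if_pos (by omega), if_pos (by omega)]
        match d with
        | 0 =>
          rw [catalanT_zero _ _ (by omega), catalanT_succ _ _ 0 (by omega)]
          decide
        | e + 1 =>
          rw [catalanT_succ (2*(e+1)+1) 1 e (by omega),
              catalanT_succ (2*(e+1)+1+1) 0 (e+1) (by omega)]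
          have p1 : (2*(e+1)+1+1).choose (e+1+1)
              = (2*(e+1)+1).choose (e+1) + (2*(e+1)+1).choose (e+1+1) :=
            Nat.choose_succ_succ _ _
          have p2 : (2*(e+1)+1+1).choose (e+1)
              = (2*(e+1)+1).choose e + (2*(e+1)+1).choose (e+1) :=
            Nat.choose_succ_succ _ _
          have sym : (2*(e+1)+1).choose (e+1+1) = (2*(e+1)+1).choose (e+1) := by
            rw [← Nat.choose_symm (show e+1 ≤ 2*(e+1)+1 by omega)]
            congr 1
            omega
          rw [show e+2 = e+1+1 from rfl, p1, p2, sym]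
          push_cast
          ring
    | j + 1 =>
      show ctri n j + ctri n (j+2) = _
      rw [ih j, ih (j+2)]
      by_cases hle : j ≤ n
      · rcases Nat.even_or_odd (n - j) with ⟨d, hd⟩ | ⟨d, hd⟩
        · have hn : n = j + 2*d := by omega
          subst hn
          rw [if_pos (by omega)]
          match d with
          | 0 =>
            rw [if_neg (by omega), if_pos (by omega), catalanT_zero (j+2*0) j (by omega),
                catalanT_zero (j+2*0+1) (j+1) (by omega)]
            ring
          | 1 =>
            rw [if_pos (by omega), if_pos (by omega), catalanT_succ (j+2*1) j 0 (by omega),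
                catalanT_zero (j+2*1) (j+2) (by omega),
                catalanT_succ (j+2*1+1) (j+1) 0 (by omega)]
            have p1 : (j+2*1+1).choose (0+1) = (j+2*1).choose 0 + (j+2*1).choose (0+1) :=
              Nat.choose_succ_succ _ _
            rw [p1]
            push_cast [Nat.choose_zero_right]
            ring
          | e + 2 =>
            rw [if_pos (by omega), if_pos (by omega),
                catalanT_succ (j+2*(e+2)) j (e+1) (by omega),
                catalanT_succ (j+2*(e+2)) (j+2) e (by omega),
                catalanT_succ (j+2*(e+2)+1) (j+1) (e+1) (by omega)]
            have p1 : (j+2*(e+2)+1).choose (e+1+1)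
                = (j+2*(e+2)).choose (e+1) + (j+2*(e+2)).choose (e+1+1) :=
              Nat.choose_succ_succ _ _
            have p2 : (j+2*(e+2)+1).choose (e+1)
                = (j+2*(e+2)).choose e + (j+2*(e+2)).choose (e+1) :=
              Nat.choose_succ_succ _ _
            rw [show e+2 = e+1+1 from rfl, p1, p2]
            push_cast
            ring
        · rw [if_neg (by omega), if_neg (by omega), if_neg (by omega)]; ring
      · rw [if_neg (by omega), if_neg (by omega), if_neg (by omega)]; ring

/-- For every `n`, `X^n = ∑_{k=0}^{⌊n/2⌋} T(n, n-2k) * S (n-2k)` in `ℤ[X]`. -/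
theorem stmt5 (n : ℕ) :
    (X : Polynomial ℤ) ^ n =
      ∑ k ∈ Finset.range (n / 2 + 1), C (catalanT n (n - 2 * k)) * chebS (n - 2 * k) := by
  rw [step1 n]
  rw [show (Finset.range (n+1)) = Finset.filter (fun j => (n - j) % 2 = 0) (Finset.range (n+1))
        ∪ Finset.filter (fun j => ¬ (n - j) % 2 = 0) (Finset.range (n+1)) from
      (Finset.filter_union_filter_not_eq _ _).symm]
  rw [Finset.sum_union (Finset.disjoint_filter_filter_not _ _ _)]
  have h0 : ∑ j ∈ Finset.filter (fun j => ¬ (n - j) % 2 = 0) (Finset.range (n+1)),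
      C (ctri n j) * chebS j = 0 := by
    apply Finset.sum_eq_zero
    intro j hj
    simp only [Finset.mem_filter, Finset.mem_range] at hj
    rw [ctri_eq, if_neg (by omega)]
    simp
  rw [h0, add_zero]
  apply Finset.sum_nbij' (i := fun j => (n - j) / 2) (j := fun k => n - 2 * k)
  · intro a ha
    simp only [Finset.mem_filter, Finset.mem_range] at ha ⊢
    omega
  · intro a ha
    simp only [Finset.mem_filter, Finset.mem_range] at ha ⊢
    omega
  · intro a ha
    simp only [Finset.mem_filter, Finset.mem_range] at ha
    omega
  · intro a ha
    simp only [Finset.mem_range] at ha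
    omega
  · intro a ha
    simp only [Finset.mem_filter, Finset.mem_range] at ha
    have : n - 2 * ((n - a) / 2) = a := by omega
    rw [this, ctri_eq, if_pos ⟨by omega, ha.2⟩]
end

section
/- Let A be an additive commutative group and let a, b : ℕ → A be sequences such that for every n ∈ ℕ, a n = ∑_{k=0}^{⌊n/2⌋} (−1)^k · binom(n−k, k) • b (n−2k) (integer scalar action). Then for every n ∈ ℕ, b n = ∑_{k=0}^{⌊n/2⌋} T(n, n−2k) • a (n−2k), where T(n,m) = binom(n, (n−m)/2) − binom(n, (n−m)/2 − 1) with binom(n, −1) interpreted as 0. -/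
open Finset

theorem Int.neg_one_pow_mul_choose_eq_ringChoose (r j : ℕ) :
    (-1) ^ j * (r.choose j : ℤ) = Ring.choose ((j : ℤ) - r - 1) j := by
  have h := Ring.choose_neg ((r : ℤ) + 1 - j) j
  rw [show -((r : ℤ) + 1 - j) = j - r - 1 by ring, show (r : ℤ) + 1 - j + j - 1 = r by ring,
    Ring.choose_natCast, Units.smul_def, Int.coe_negOnePow_natCast, smul_eq_mul] at h
  exact h.symm

theorem Ring.sum_range_choose_mul_choose {R : Type*} [CommRing R] [BinomialRing R]
    (n m : ℕ) (s : R) :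
    ∑ k ∈ range (m + 1), (n.choose k : R) * Ring.choose s (m - k) = Ring.choose (n + s) m := by
  rw [Ring.add_choose_eq m (Commute.all _ _), Nat.sum_antidiagonal_eq_sum_range_succ_mk]
  simp only [Ring.choose_natCast]

theorem catalanT_sub_two_mul {n k : ℕ} (hk : 2 * k ≤ n) :
    catalanT n (n - 2 * k) = n.choose k - if k = 0 then 0 else (n.choose (k - 1) : ℤ) := by
  rw [catalanT, show (n - (n - 2 * k)) / 2 = k by omega]

theorem sum_catalanT_mul_choose {n m : ℕ} (hm : 2 * m ≤ n) (s : ℤ) :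
    ∑ k ∈ range (m + 1), catalanT n (n - 2 * k) * Ring.choose s (m - k) =
      Ring.choose (n + s) m - if m = 0 then 0 else Ring.choose (n + s) (m - 1) := by
  rw [sum_congr rfl fun k hk => by
      rw [catalanT_sub_two_mul (by have := mem_range.mp hk; omega), sub_mul],
    sum_sub_distrib, Ring.sum_range_choose_mul_choose]
  congr 1
  rcases m with _ | m
  · simp
  · rw [sum_range_succ', ← Ring.sum_range_choose_mul_choose]
    simp

theorem sum_catalanT_mul_neg_one_pow_mul_choose {n m : ℕ} (hm : 2 * m ≤ n) :
    ∑ k ∈ range (m + 1),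
        catalanT n (n - 2 * k) * ((-1) ^ (m - k) * ((n - 2 * k - (m - k)).choose (m - k) : ℤ)) =
      if m = 0 then 1 else 0 := by
  have upper_neg : ∀ k ∈ range (m + 1),
      (-1) ^ (m - k) * ((n - 2 * k - (m - k)).choose (m - k) : ℤ) =
        Ring.choose (2 * m - n - 1 : ℤ) (m - k) := by
    intro k hk
    rw [Int.neg_one_pow_mul_choose_eq_ringChoose]
    have := mem_range.mp hk
    congr 1
    omega
  rw [sum_congr rfl fun k hk => by rw [upper_neg k hk], sum_catalanT_mul_choose hm,
    show (n : ℤ) + (2 * m - n - 1) = 2 * m - 1 by ring]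
  rcases m with _ | m
  · simp
  · rw [show 2 * ((m + 1 : ℕ) : ℤ) - 1 = ((2 * m + 1 : ℕ) : ℤ) by push_cast; ring,
      Ring.choose_natCast, Ring.choose_natCast, Nat.choose_symm_half]
    simp

/-- If `a n = ∑_{k=0}^{⌊n/2⌋} (-1)^k binom(n-k,k) • b (n-2k)` for all `n`,
then `b n = ∑_{k=0}^{⌊n/2⌋} T(n, n-2k) • a (n-2k)` for all `n`. -/
theorem stmt6 {A : Type*} [AddCommGroup A] (a b : ℕ → A)
    (h : ∀ n : ℕ, a n = ∑ k ∈ Finset.range (n / 2 + 1),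
      ((-1) ^ k * ((n - k).choose k : ℤ)) • b (n - 2 * k)) :
    ∀ n : ℕ, b n = ∑ k ∈ Finset.range (n / 2 + 1),
      catalanT n (n - 2 * k) • a (n - 2 * k) := by
  intro n
  have expand : ∀ k ∈ range (n / 2 + 1), catalanT n (n - 2 * k) • a (n - 2 * k) =
      ∑ j ∈ range (n / 2 + 1 - k),
        (catalanT n (n - 2 * k) * ((-1) ^ j * ((n - 2 * k - j).choose j : ℤ))) •
          b (n - 2 * (k + j)) := by
    intro k hk
    have := mem_range.mp hk
    rw [h, smul_sum, show (n - 2 * k) / 2 + 1 = n / 2 + 1 - k by omega]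
    refine sum_congr rfl fun j _ => ?_
    rw [smul_smul, show n - 2 * k - 2 * j = n - 2 * (k + j) by omega]
  have collapse : ∀ m ∈ range (n / 2 + 1), ∑ k ∈ range (m + 1),
      (catalanT n (n - 2 * k) * ((-1) ^ (m - k) * ((n - 2 * k - (m - k)).choose (m - k) : ℤ))) •
        b (n - 2 * (k + (m - k))) = if m = 0 then b n else 0 := by
    intro m hm
    rw [sum_congr rfl fun k hk => by rw [show k + (m - k) = m by have := mem_range.mp hk; omega],
      ← sum_smul, sum_catalanT_mul_neg_one_pow_mul_choose (by have := mem_range.mp hm; omega)]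
    split_ifs with hm0 <;> simp [hm0]
  rw [sum_congr rfl expand, ← sum_range_diag_flip, sum_congr rfl collapse]
  simp
end
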